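/- arXiv:2603.11898 — 2 statements merged into one kernel-verified Lean document; each statement's English description precedes it below -/
import Mathlib

section
/- Let 0 ≤ p ≤ 1 with p ≥ 1/2, and let X be a binomial random variable with n independent trials each succeeding with probability p (n ≥ 1). Then P(X ≥ n/2) ≥ p. -/
private lemma pow_swap_le (p q : ℝ) (hq0 : 0 ≤ q) (hqp : q ≤ p) (a b : ℕ) (hab : a ≤ b) :
    p ^ a * q ^ b ≤ p ^ b * q ^ a := by
  have hp0 : 0 ≤ p := le_trans hq0 hqp
  have h1 : p ^ b = p ^ a * p ^ (b - a) := by rw [← pow_add]; congr 1; omega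
  have h2 : q ^ b = q ^ a * q ^ (b - a) := by rw [← pow_add]; congr 1; omega
  rw [h1, h2]
  have hle : q ^ (b - a) ≤ p ^ (b - a) := pow_le_pow_left₀ hq0 hqp _
  calc p ^ a * (q ^ a * q ^ (b - a)) = (p ^ a * q ^ a) * q ^ (b - a) := by ring
    _ ≤ (p ^ a * q ^ a) * p ^ (b - a) := by
        apply mul_le_mul_of_nonneg_left hle
        positivity
    _ = p ^ a * p ^ (b - a) * q ^ a := by ring


/-- A Binomial(n,p) random variable with p ≥ 1/2 and n ≥ 1 is at least n/2
with probability at least p. -/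
theorem binomial_half_successes (p : ℝ) (hp : 1/2 ≤ p) (hp1 : p ≤ 1)
    (n : ℕ) (hn : 1 ≤ n) :
    p ≤ ∑ i ∈ Finset.range (n + 1),
      (if (n : ℝ) / 2 ≤ (i : ℝ) then (n.choose i : ℝ) * p ^ i * (1 - p) ^ (n - i) else 0) := by
  set q : ℝ := 1 - p with hq
  have hq0 : 0 ≤ q := by simp [hq]; linarith
  have hp0 : (0:ℝ) < p := by linarith
  have hqp : q ≤ p := by simp [hq]; linarith
  set f : ℕ → ℝ := fun i => (n.choose i : ℝ) * p ^ i * q ^ (n - i) with hf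
  have hf0 : ∀ i, 0 ≤ f i := fun i => by
    have : (0:ℝ) ≤ (n.choose i : ℝ) := by positivity
    have := pow_nonneg hq0 (n - i)
    have := pow_nonneg hp0.le i
    positivity
  have hsum : ∑ i ∈ Finset.range (n+1), f i = 1 := by
    have h := add_pow p q n
    have hpq : p + q = 1 := by simp [hq]
    rw [hpq, one_pow] at h
    rw [h]
    apply Finset.sum_congr rfl
    intro i _
    simp [hf]; ring
  set S : ℝ := ∑ i ∈ Finset.range (n+1),
      (if (n : ℝ) / 2 ≤ (i : ℝ) then f i else 0) with hS
  set T : ℝ := ∑ i ∈ Finset.range (n+1),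
      (if (n : ℝ) / 2 ≤ (i : ℝ) then 0 else f i) with hT
  have hST : S + T = 1 := by
    rw [hS, hT, ← Finset.sum_add_distrib, ← hsum]
    apply Finset.sum_congr rfl
    intro i _
    by_cases h : (n : ℝ) / 2 ≤ (i : ℝ) <;> simp [h]
  have key : p * T ≤ q * S := by
    have h1 : p * T = ∑ i ∈ Finset.range (n+1),
        (if (n : ℝ) / 2 ≤ (i : ℝ) then 0 else p * f i) := by
      rw [hT, Finset.mul_sum]
      apply Finset.sum_congr rfl
      intro i _
      by_cases h : (n : ℝ) / 2 ≤ (i : ℝ) <;> simp [h]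
    have h2 : q * S = ∑ i ∈ Finset.range (n+1),
        (if (n : ℝ) / 2 ≤ (i : ℝ) then q * f i else 0) := by
      rw [hS, Finset.mul_sum]
      apply Finset.sum_congr rfl
      intro i _
      by_cases h : (n : ℝ) / 2 ≤ (i : ℝ) <;> simp [h]
    rw [h1, h2]
    rw [← Finset.sum_range_reflect (fun i => if (n : ℝ) / 2 ≤ (i : ℝ) then 0 else p * f i) (n+1)]
    apply Finset.sum_le_sum
    intro j hj
    have hjn : j ≤ n := by
      have := Finset.mem_range.mp hj; omega
    have hsub : n + 1 - 1 - j = n - j := by omega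
    rw [hsub]
    by_cases hc : (n : ℝ) / 2 ≤ ((n - j : ℕ) : ℝ)
    · rw [if_pos hc]
      by_cases hc2 : (n : ℝ) / 2 ≤ (j : ℝ)
      · rw [if_pos hc2]; exact mul_nonneg hq0 (hf0 j)
      · rw [if_neg hc2]
    · rw [if_neg hc]
      -- from ¬ hc : (n - j : ℕ) < n/2, derive n + 1 ≤ 2 * j
      have hcast : ((n - j : ℕ) : ℝ) = (n : ℝ) - j := by
        push_cast [hjn]; ring
      have hlt : (n : ℝ) - j < (n : ℝ) / 2 := by rw [← hcast]; linarith [not_le.mp hc]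
      have hjbig : (n : ℝ) / 2 < j := by linarith
      have hnj : n + 1 ≤ 2 * j := by
        have : (n : ℝ) < 2 * j := by linarith
        exact_mod_cast Nat.lt_iff_add_one_le.mp (by exact_mod_cast this)
      have hc2 : (n : ℝ) / 2 ≤ (j : ℝ) := le_of_lt hjbig
      rw [if_pos hc2]
      -- goal: p * f (n - j) ≤ q * f j
      have hchoose : (n.choose (n - j) : ℝ) = (n.choose j : ℝ) := by
        rw [Nat.choose_symm hjn]
      have hab : n - j + 1 ≤ j := by omega
      have haux : p ^ (n - j + 1) * q ^ j ≤ p ^ j * q ^ (n - j + 1) :=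
        pow_swap_le p q hq0 hqp _ _ hab
      have e1 : p * f (n - j) = (n.choose j : ℝ) * (p ^ (n - j + 1) * q ^ j) := by
        simp only [hf, hchoose, Nat.sub_sub_self hjn, pow_succ]
        ring
      have e2 : q * f j = (n.choose j : ℝ) * (p ^ j * q ^ (n - j + 1)) := by
        simp only [hf, pow_succ]
        ring
      rw [e1, e2]
      apply mul_le_mul_of_nonneg_left haux
      positivity
  nlinarith [hf0 0, key, hST]
end

section
/- Let p ∈ [1/2, 1] and n ≥ 2. Then (1-p) · Σ_{i=0}^{⌊n/2⌋-1} C(n-1, i) p^{n-1-i} (1-p)^i ≥ p · Σ_{i=0}^{⌈n/2⌉-2} C(n-1, i) p^i (1-p)^{n-1-i}. -/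
lemma pow_mul_pow_le_aux {a b : ℝ} (ha : 0 ≤ a) (hab : a ≤ b) {j k : ℕ} (hjk : j ≤ k) :
    b ^ j * a ^ k ≤ b ^ k * a ^ j := by
  have hb : 0 ≤ b := ha.trans hab
  calc b ^ j * a ^ k = (b ^ j * a ^ j) * a ^ (k - j) := by
        rw [mul_assoc, ← pow_add]; congr 2; omega
    _ ≤ (b ^ j * a ^ j) * b ^ (k - j) :=
        mul_le_mul_of_nonneg_left (pow_le_pow_left₀ ha hab _) (by positivity)
    _ = b ^ k * a ^ j := by
        rw [mul_right_comm, ← pow_add]; congr 2; omega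

/-- Inequality (5)-(6): for p ∈ [1/2,1] and n ≥ 2,
(1-p) Σ_{i=0}^{⌊n/2⌋-1} C(n-1,i) p^(n-1-i) (1-p)^i
  ≥ p Σ_{i=0}^{⌈n/2⌉-2} C(n-1,i) p^i (1-p)^(n-1-i). -/
theorem sum_ineq (p : ℝ) (hp : 1/2 ≤ p) (hp1 : p ≤ 1) (n : ℕ) (hn : 2 ≤ n) :
    p * ∑ i ∈ Finset.range ((n + 1) / 2 - 1),
        ((n - 1).choose i : ℝ) * p ^ i * (1 - p) ^ (n - 1 - i) ≤
      (1 - p) * ∑ i ∈ Finset.range (n / 2),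
        ((n - 1).choose i : ℝ) * p ^ (n - 1 - i) * (1 - p) ^ i := by
  have h0 : (0:ℝ) ≤ 1 - p := by linarith
  have hp0 : (0:ℝ) ≤ p := by linarith
  have hle : 1 - p ≤ p := by linarith
  rw [Finset.mul_sum, Finset.mul_sum]
  refine le_trans (Finset.sum_le_sum ?_) (Finset.sum_le_sum_of_subset_of_nonneg ?_ ?_)
  · intro i hi
    simp only [Finset.mem_range] at hi
    have hjk : i + 1 ≤ n - 1 - i := by omega
    have key := pow_mul_pow_le_aux h0 hle hjk
    have hc : (0:ℝ) ≤ ((n-1).choose i : ℝ) := Nat.cast_nonneg _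
    calc p * (((n - 1).choose i : ℝ) * p ^ i * (1 - p) ^ (n - 1 - i))
        = ((n - 1).choose i : ℝ) * (p ^ (i+1) * (1 - p) ^ (n - 1 - i)) := by ring
      _ ≤ ((n - 1).choose i : ℝ) * (p ^ (n - 1 - i) * (1 - p) ^ (i+1)) :=
          mul_le_mul_of_nonneg_left key hc
      _ = (1 - p) * (((n - 1).choose i : ℝ) * p ^ (n - 1 - i) * (1 - p) ^ i) := by ring
  · intro i hi
    simp only [Finset.mem_range] at *
    omega
  · intro i _ _
    positivity
end
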